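/- Let Z be an n×p matrix with standardized columns (z_{[,j]}ᵀz_{[,j]} = n−1), let ζ ∈ ℝⁿ with ‖ζ‖₂ ≤ √(n(1+e)²) for some e ≥ 0, and for λ > 0 define u_j = (1/λ) z_{[,j]}ᵀζ. Then for any i, j, |u_i − u_j| ≤ (1/λ)·√(2(n−1)(1−r_{ij}))·√(n(1+e)²), where r_{ij} = (n−1)⁻¹ z_{[,i]}ᵀz_{[,j]}. -/
import Mathlib


open Finset Matrix

theorem stmt16 {n p : ℕ} (hn : 1 < n) (Z : Matrix (Fin n) (Fin p) ℝ)
    (hstd : ∀ j : Fin p, (fun k => Z k j) ⬝ᵥ (fun k => Z k j) = (n : ℝ) - 1)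
    (ζ : Fin n → ℝ) (e : ℝ) (he : 0 ≤ e)
    (hζ : Real.sqrt (∑ k, ζ k ^ 2) ≤ Real.sqrt ((n : ℝ) * (1 + e) ^ 2))
    (lam : ℝ) (hlam : 0 < lam)
    (u : Fin p → ℝ) (hu : ∀ j, u j = (1 / lam) * ((fun k => Z k j) ⬝ᵥ ζ))
    (r : Fin p → Fin p → ℝ)
    (hr : ∀ i j, r i j = ((n : ℝ) - 1)⁻¹ * ((fun k => Z k i) ⬝ᵥ (fun k => Z k j)))
    (i j : Fin p) :
    |u i - u j| ≤ (1 / lam) * Real.sqrt (2 * ((n : ℝ) - 1) * (1 - r i j)) *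
      Real.sqrt ((n : ℝ) * (1 + e) ^ 2) := by
  have hn1 : (0 : ℝ) < (n : ℝ) - 1 := by
    have : (1 : ℝ) < (n : ℝ) := by exact_mod_cast hn
    linarith
  set v : Fin n → ℝ := fun k => Z k i - Z k j with hv
  -- sum of squares of v
  have hsum : ∑ k, v k ^ 2 = 2 * ((n : ℝ) - 1) * (1 - r i j) := by
    have h1 := hstd i
    have h2 := hstd j
    have h3 : (fun k => Z k i) ⬝ᵥ (fun k => Z k j) = ((n : ℝ) - 1) * r i j := by
      rw [hr]; field_simp
    simp only [dotProduct] at h1 h2 h3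
    have : ∑ k, v k ^ 2 = ∑ k, ((Z k i * Z k i) + (Z k j * Z k j) - 2 * (Z k i * Z k j)) := by
      apply Finset.sum_congr rfl; intro k _; simp [hv]; ring
    rw [this, Finset.sum_sub_distrib, Finset.sum_add_distrib, ← Finset.mul_sum,
      h1, h2, h3]
    ring
  have hdiff : u i - u j = (1 / lam) * ∑ k, v k * ζ k := by
    simp only [hu, dotProduct, hv]
    rw [← mul_sub, ← Finset.sum_sub_distrib]
    congr 1
    apply Finset.sum_congr rfl; intro k _; ring
  have hcs : |∑ k, v k * ζ k| ≤
      Real.sqrt (2 * ((n : ℝ) - 1) * (1 - r i j)) * Real.sqrt (∑ k, ζ k ^ 2) := by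
    have h := Finset.sum_mul_sq_le_sq_mul_sq Finset.univ v ζ
    rw [← hsum]
    rw [← Real.sqrt_mul (by positivity)]
    rw [← Real.sqrt_sq_eq_abs]
    exact Real.sqrt_le_sqrt h
  calc |u i - u j| = (1 / lam) * |∑ k, v k * ζ k| := by
        rw [hdiff, abs_mul, abs_of_pos (by positivity)]
    _ ≤ (1 / lam) * (Real.sqrt (2 * ((n : ℝ) - 1) * (1 - r i j)) * Real.sqrt (∑ k, ζ k ^ 2)) := by
        apply mul_le_mul_of_nonneg_left hcs (by positivity)
    _ ≤ (1 / lam) * Real.sqrt (2 * ((n : ℝ) - 1) * (1 - r i j)) *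
        Real.sqrt ((n : ℝ) * (1 + e) ^ 2) := by
        rw [mul_assoc, mul_assoc]
        gcongr
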